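/- arXiv:1309.4973 — 3 statements merged into one kernel-verified Lean document; each statement's English description precedes it below -/
import Mathlib

section
/- Constant-approximation guarantee of FCA: under the triangle inequality for time-dependent distances, the slope bounds, and the asymmetry bound, if R_o = D[o,ℓ_o](t_o) ≤ D[o,d](t_o) and Δ[ℓ_o,d] is a (1+ε)-upper approximation of D[ℓ_o,d], then D[o,d](t_o) ≤ R_o + Δ[ℓ_o,d](t_o + R_o) ≤ (1+ε)·D[o,d](t_o) + ψ·R_o ≤ (1+ε+ψ)·D[o,d](t_o), where ψ = 1 + Λ_max(1+ε)(1 + 2ζ + Λ_max·ζ) + (1+ε)ζ. -/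
/-- Constant-approximation guarantee of the query algorithm FCA. -/
theorem FCA_approximation {V : Type*}
    (D : V → V → ℝ → ℝ) (Λmin Λmax ζ ε : ℝ)
    (hnonneg : ∀ x y t, 0 ≤ D x y t)
    (htri : ∀ x y z t, D x z t ≤ D x y t + D y z (t + D x y t))
    (hΛmin : 0 ≤ Λmin) (hΛmin1 : Λmin < 1) (hΛmax : 0 ≤ Λmax)
    (hslope : ∀ x y t₁ t₂, t₁ < t₂ →
      -Λmin ≤ (D x y t₁ - D x y t₂) / (t₁ - t₂) ∧
      (D x y t₁ - D x y t₂) / (t₁ - t₂) ≤ Λmax)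
    (hζ : 1 ≤ ζ)
    (hopp : ∀ x y t, D x y t ≤ ζ * D y x t)
    (hε : 0 ≤ ε)
    (o d ℓ : V) (t_o R_o : ℝ)
    (hR : R_o = D o ℓ t_o)
    (hRle : R_o ≤ D o d t_o)
    (Δ : ℝ → ℝ)
    (happrox : ∀ t, D ℓ d t ≤ Δ t ∧ Δ t ≤ (1 + ε) * D ℓ d t)
    (ψ : ℝ)
    (hψ : ψ = 1 + Λmax * (1 + ε) * (1 + 2 * ζ + Λmax * ζ) + (1 + ε) * ζ) :
    D o d t_o ≤ R_o + Δ (t_o + R_o) ∧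
    R_o + Δ (t_o + R_o) ≤ (1 + ε) * D o d t_o + ψ * R_o ∧
    (1 + ε) * D o d t_o + ψ * R_o ≤ (1 + ε + ψ) * D o d t_o := by
  have hup : ∀ x y t₁ t₂, t₁ ≤ t₂ → D x y t₂ ≤ D x y t₁ + Λmax * (t₂ - t₁) := by
    intro x y t₁ t₂ h
    rcases eq_or_lt_of_le h with rfl | h
    · simp
    · have h2 := (hslope x y t₁ t₂ h).2
      have ht : t₁ - t₂ < 0 := by linarith
      rw [div_le_iff_of_neg ht] at h2
      nlinarith
  have hR0 : 0 ≤ R_o := hR ▸ hnonneg o ℓ t_o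
  set t' := t_o + R_o with ht'
  have h1 : D o ℓ t' ≤ (1 + Λmax) * R_o := by
    have := hup o ℓ t_o t' (by linarith)
    nlinarith [this]
  have hζ0 : (0:ℝ) ≤ ζ := by linarith
  have h2 : D ℓ o t' ≤ ζ * ((1 + Λmax) * R_o) := by
    calc D ℓ o t' ≤ ζ * D o ℓ t' := hopp ℓ o t'
    _ ≤ ζ * ((1 + Λmax) * R_o) := by
        exact mul_le_mul_of_nonneg_left h1 hζ0
  have hℓo0 : 0 ≤ D ℓ o t' := hnonneg ℓ o t'
  have h3 := htri ℓ o d t'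
  have h4 : D o d (t' + D ℓ o t') ≤ D o d t_o + Λmax * (R_o + D ℓ o t') := by
    have := hup o d t_o (t' + D ℓ o t') (by linarith)
    nlinarith [this]
  have h5 : D ℓ d t' ≤ D o d t_o +
      (ζ * (1 + Λmax) + Λmax * (1 + ζ * (1 + Λmax))) * R_o := by
    nlinarith [mul_le_mul_of_nonneg_left h2 hΛmax]
  have h6 := (happrox t').1
  have h7 := (happrox t').2
  have hℓd0 : 0 ≤ D ℓ d t' := hnonneg ℓ d t'
  have hψ0 : 0 ≤ ψ := by
    have hA : 0 ≤ Λmax * (1 + ε) * (1 + 2 * ζ + Λmax * ζ) :=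
      mul_nonneg (mul_nonneg hΛmax (by linarith)) (by nlinarith)
    nlinarith
  refine ⟨?_, ?_, ?_⟩
  · calc D o d t_o ≤ D o ℓ t_o + D ℓ d (t_o + D o ℓ t_o) := htri o ℓ d t_o
    _ = R_o + D ℓ d t' := by rw [← hR, ht']
    _ ≤ R_o + Δ t' := by linarith
  · have : Δ t' ≤ (1 + ε) * (D o d t_o +
        (ζ * (1 + Λmax) + Λmax * (1 + ζ * (1 + Λmax))) * R_o) := by
      nlinarith [mul_le_mul_of_nonneg_left h5 (by linarith : (0:ℝ) ≤ 1 + ε)]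
    nlinarith
  · nlinarith [hnonneg o d t_o]
end

section
/- Geometric growth of ball radii in RQA (inductive step): suppose t_d - t_o > 0, ε, δ, ψ > 0, and for indices i = 0, ..., k the radii satisfy R_i > (1 + ε/ψ)^i · (δ/ψ) · (t_d - t_o). If a quantity S satisfies S ≤ (1 + ε)(t_d - t_o) - ε·(R_0 + ⋯ + R_k) + ψ·R_{k+1}, then either S ≤ (1 + ε + δ)·(t_d - t_o) or R_{k+1} > (1 + ε/ψ)^{k+1} · (δ/ψ) · (t_d - t_o). -/
/-- Inductive step of the geometric growth of ball radii in RQA. -/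
theorem rqa_inductive_step
    (ε δ ψ t_o t_d : ℝ) (hε : 0 < ε) (hδ : 0 < δ) (hψ : 0 < ψ)
    (hT : 0 < t_d - t_o)
    (R : ℕ → ℝ) (k : ℕ)
    (hR : ∀ i ≤ k, R i > (1 + ε / ψ) ^ i * (δ / ψ) * (t_d - t_o))
    (S : ℝ)
    (hS : S ≤ (1 + ε) * (t_d - t_o) - ε * (∑ i ∈ Finset.range (k + 1), R i)
            + ψ * R (k + 1)) :
    S ≤ (1 + ε + δ) * (t_d - t_o) ∨
    R (k + 1) > (1 + ε / ψ) ^ (k + 1) * (δ / ψ) * (t_d - t_o) := by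
  rcases le_or_gt (R (k+1)) ((1 + ε / ψ) ^ (k+1) * (δ / ψ) * (t_d - t_o)) with h | h
  · left
    have hsum : (∑ i ∈ Finset.range (k+1), (1 + ε / ψ) ^ i * (δ / ψ) * (t_d - t_o))
        ≤ ∑ i ∈ Finset.range (k+1), R i :=
      Finset.sum_le_sum fun i hi => le_of_lt (hR i (Finset.mem_range_succ_iff.mp hi))
    have hgs : (∑ i ∈ Finset.range (k+1), (1 + ε / ψ) ^ i) * (ε / ψ)
        = (1 + ε / ψ) ^ (k+1) - 1 := by
      have := geom_sum_mul (1 + ε / ψ) (k+1)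
      simpa using this
    have hfac : (∑ i ∈ Finset.range (k+1), (1 + ε / ψ) ^ i * (δ / ψ) * (t_d - t_o))
        = (∑ i ∈ Finset.range (k+1), (1 + ε / ψ) ^ i) * (δ / ψ) * (t_d - t_o) := by
      rw [← Finset.sum_mul, ← Finset.sum_mul]
    have hψ' : ψ ≠ 0 := ne_of_gt hψ
    have key : ε * (∑ i ∈ Finset.range (k+1), R i)
        ≥ δ * ((1 + ε / ψ) ^ (k+1) - 1) * (t_d - t_o) := by
      have h1 : ε * (∑ i ∈ Finset.range (k+1), (1 + ε / ψ) ^ i * (δ / ψ) * (t_d - t_o))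
          = δ * ((1 + ε / ψ) ^ (k+1) - 1) * (t_d - t_o) := by
        rw [hfac, ← hgs]
        field_simp
      nlinarith [hsum]
    have h2 : ψ * R (k+1) ≤ (1 + ε / ψ) ^ (k+1) * δ * (t_d - t_o) := by
      have := mul_le_mul_of_nonneg_left h (le_of_lt hψ)
      calc ψ * R (k+1) ≤ ψ * ((1 + ε / ψ) ^ (k+1) * (δ / ψ) * (t_d - t_o)) := this
        _ = (1 + ε / ψ) ^ (k+1) * δ * (t_d - t_o) := by field_simp
    nlinarith [key, h2]
  · right; exact h
end

section
/- Stretch bound of RQA: let ε, ψ, δ > 0 and let T = t_d - t_o > 0. If R_0, ..., R_r are real numbers with R_i > (1 + ε/ψ)^i · (δ/ψ) · T for all i = 0,...,r, and R_0 + ⋯ + R_r ≤ T, then ε/δ > (1 + ε/ψ)^{r+1} - 1; equivalently, δ < ε/((1 + ε/ψ)^{r+1} - 1) and r < ln(1 + ε/δ)/ln(1 + ε/ψ) - 1. -/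
/-- Stretch bound of RQA: if the radii grow geometrically and their sum is at most
the total travel time `T`, then `ε/δ > (1 + ε/ψ)^{r+1} - 1`, equivalently
`δ < ε/((1 + ε/ψ)^{r+1} - 1)` and `r < ln(1 + ε/δ)/ln(1 + ε/ψ) - 1`. -/
theorem rqa_stretch_bound
    (ε ψ δ T : ℝ) (hε : 0 < ε) (hψ : 0 < ψ) (hδ : 0 < δ) (hT : 0 < T)
    (r : ℕ) (R : ℕ → ℝ)
    (hR : ∀ i ≤ r, R i > (1 + ε / ψ) ^ i * (δ / ψ) * T)
    (hsum : (∑ i ∈ Finset.range (r + 1), R i) ≤ T) :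
    ε / δ > (1 + ε / ψ) ^ (r + 1) - 1 ∧
    δ < ε / ((1 + ε / ψ) ^ (r + 1) - 1) ∧
    (r : ℝ) < Real.log (1 + ε / δ) / Real.log (1 + ε / ψ) - 1 := by
  set q : ℝ := ε / ψ with hq
  have hq0 : 0 < q := div_pos hε hψ
  have h1 : (∑ i ∈ Finset.range (r + 1), (1 + q) ^ i * (δ / ψ) * T)
      < ∑ i ∈ Finset.range (r + 1), R i :=
    Finset.sum_lt_sum_of_nonempty (by simp)
      (fun i hi => hR i (Nat.lt_succ_iff.mp (Finset.mem_range.mp hi)))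
  have h2 : (∑ i ∈ Finset.range (r + 1), (1 + q) ^ i * (δ / ψ) * T)
      = ((1 + q) ^ (r + 1) - 1) / q * (δ / ψ) * T := by
    rw [← Finset.sum_mul, ← Finset.sum_mul, geom_sum_eq (by nlinarith) (r + 1),
      add_sub_cancel_left]
  have key : ((1 + q) ^ (r + 1) - 1) / q * (δ / ψ) * T < T := by
    rw [← h2]; exact lt_of_lt_of_le h1 hsum
  have key2 : ((1 + q) ^ (r + 1) - 1) / q * (δ / ψ) < 1 :=
    lt_of_mul_lt_mul_right (by linarith) hT.le
  have hP : 0 < (1 + q) ^ (r + 1) - 1 := by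
    have := one_lt_pow₀ (a := 1 + q) (by linarith) (Nat.succ_ne_zero r)
    simp only [Nat.succ_eq_add_one] at this
    linarith
  have key3 : ((1 + q) ^ (r + 1) - 1) * δ < ε := by
    have h := key2
    rw [div_mul_eq_mul_div, div_lt_one hq0, hq, ← mul_div_assoc,
      div_lt_div_iff₀ hψ hψ] at h
    nlinarith
  have hεδ : ε / δ > (1 + q) ^ (r + 1) - 1 := by
    rw [gt_iff_lt, lt_div_iff₀ hδ]; exact key3
  refine ⟨hεδ, ?_, ?_⟩
  · rw [lt_div_iff₀ hP]; nlinarith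
  · have hlog : 0 < Real.log (1 + q) := Real.log_pos (by linarith)
    rw [lt_sub_iff_add_lt, lt_div_iff₀ hlog]
    have hlt : (1 + q) ^ (r + 1) < 1 + ε / δ := by linarith
    have hlog2 := Real.log_lt_log (by positivity) hlt
    rw [Real.log_pow] at hlog2
    push_cast at hlog2 ⊢
    linarith
end
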